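/- In the Smith–Fraenkel–Perl theory of cyclic impartial games, a position G is a Draw (both players can avoid losing but neither can win) if and only if its Grundy value is ∞_D with 0 ∉ D. -/

import Mathlib

/-- The minimum excluded value of a set of nonnegative integers. -/
noncomputable def mex (S : Set ℕ) : ℕ := sInf {n | n ∉ S}

/-- A cyclic impartial game board: a finite digraph, possibly with cycles.
`adj x y` means `(V, y)` is an option of `(V, x)`. -/
structure CycGame where
  V : Type
  finite : Finite V
  adj : V → V → Prop

namespace CycGame

open Classical in
/-- One step of the Smith–Fraenkel–Perl labeling algorithm (Algorithm 2):
an unassigned node `x` receives the value `m = mex` of the assigned values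
of its options, provided every option that is unassigned or assigned a
value greater than `m` reverts, i.e. has an option assigned `m`.  Here
`none` plays the role of the symbol `∞`. -/
noncomputable def step (G : CycGame) (g : G.V → Option ℕ) : G.V → Option ℕ :=
  fun x =>
    match g x with
    | some m => some m
    | none =>
      let m := mex {k | ∃ y, G.adj x y ∧ g y = some k}
      if ∀ y, G.adj x y → (∀ k, g y = some k → m < k) →
          ∃ z, G.adj y z ∧ g z = some m then
        some m
      else none

/-- The Smith–Fraenkel–Perl Grundy labeling: iterate the algorithm (from the
all-`∞` initialization) until it stabilizes; `Nat.card G.V + 1` steps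
suffice.  `smith G x = some m` means `(V, x)` has finite Grundy value `m`;
`smith G x = none` means `x` lies in a cyclic zone (value `∞_D`). -/
noncomputable def smith (G : CycGame) : G.V → Option ℕ :=
  (G.step)^[Nat.card G.V + 1] fun _ => none

/-- The exit set `D` of a node: the finite Grundy values of its options.
For a node in a cyclic zone this is the subscript in `∞_D`. -/
def exits (G : CycGame) (x : G.V) : Set ℕ :=
  {a | ∃ y, G.adj x y ∧ G.smith y = some a}

/-- `x` is an N-position: the next player can force a win, i.e. there is a
move to a position all of whose options are N-positions (a P-position). -/
inductive NPos (G : CycGame) : G.V → Prop where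
  | intro (x y : G.V) (h : G.adj x y) (hy : ∀ z, G.adj y z → NPos G z) :
      NPos G x

/-- `x` is a P-position: it is terminal or all of its options are
N-positions. -/
def PPos (G : CycGame) (x : G.V) : Prop := ∀ y, G.adj x y → G.NPos y

/-- `x` is a Draw: neither player can force a win (the game is tied by
infinite play). -/
def Draw (G : CycGame) (x : G.V) : Prop := ¬ G.NPos x ∧ ¬ G.PPos x

/-- The disjunctive sum of two cyclic impartial games: a move is a move in
exactly one component. -/
def sum (G H : CycGame) : CycGame where
  V := G.V × H.V
  finite := by have := G.finite; have := H.finite; exact inferInstance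
  adj := fun p q =>
    (G.adj p.1 q.1 ∧ p.2 = q.2) ∨ (H.adj p.2 q.2 ∧ p.1 = q.1)

end CycGame

/-!
A finite label `0` produced by the algorithm is sound for P and a nonzero one for N: a node
labelled `0` has every option either labelled nonzero or reverting through a `0`, and a node
labelled `m > 0` has an option labelled `0`.  Since the algorithm only ever turns `∞` into
finite labels, it stabilises, so `smith` is a fixed point of `step`.  Conversely, by induction
on the winning strategy, every N-position has an option of Grundy value `0`; the fixed point
property then forces every P-position to be labelled `0`.
-/

lemma mex_notMem {S : Set ℕ} (hS : S.Finite) : mex S ∉ S :=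
  Nat.sInf_mem hS.infinite_compl.nonempty

lemma mem_of_lt_mex {S : Set ℕ} {k : ℕ} (h : k < mex S) : k ∈ S :=
  not_not.mp (Nat.notMem_of_lt_sInf h)

section Stabilization

variable {α β : Type*} [Finite α] {f : (α → Option β) → α → Option β}

lemma ncard_setOf_eq_none_lt (hf : ∀ g x b, g x = some b → f g x = some b)
    {g : α → Option β} (hg : f g ≠ g) :
    {x | f g x = none}.ncard < {x | g x = none}.ncard := by
  refine Set.ncard_lt_ncard
    ⟨fun x hx => ?_, fun hsub => hg (funext fun x => ?_)⟩ (Set.toFinite _)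
  · rcases hgx : g x with _ | b
    · exact hgx
    · simp [hf g x b hgx] at hx
  · rcases hgx : g x with _ | b
    · exact hsub hgx
    · exact hf g x b hgx

lemma isFixedPt_iterate_of_card_lt (hf : ∀ g x b, g x = some b → f g x = some b)
    (g₀ : α → Option β) {n : ℕ} (hn : Nat.card α < n) :
    Function.IsFixedPt f (f^[n] g₀) := by
  have key : ∀ n, Function.IsFixedPt f (f^[n] g₀) ∨
      n + {x | f^[n] g₀ x = none}.ncard ≤ Nat.card α := by
    intro n
    induction n with
    | zero => exact Or.inr (by simpa using Set.ncard_le_card _)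
    | succ k ih =>
      rw [Function.iterate_succ_apply']
      by_cases hfix : Function.IsFixedPt f (f^[k] g₀)
      · exact Or.inl (hfix.symm ▸ hfix)
      · have := ncard_setOf_eq_none_lt hf hfix
        have := ih.resolve_left hfix
        omega
  exact (key n).resolve_right (by omega)

end Stabilization

namespace CycGame

variable (G : CycGame)

lemma step_of_eq_some {g : G.V → Option ℕ} {x : G.V} {m : ℕ} (h : g x = some m) :
    G.step g x = some m := by
  simp [step, h]

lemma smith_isFixedPt : Function.IsFixedPt G.step G.smith :=
  have := G.finite
  isFixedPt_iterate_of_card_lt (fun _ _ _ => G.step_of_eq_some) _ (Nat.lt_succ_self _)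

lemma finite_setOf_adj_eq_some (g : G.V → Option ℕ) (x : G.V) :
    {k | ∃ y, G.adj x y ∧ g y = some k}.Finite := by
  have := G.finite
  refine ((Set.finite_range g).preimage (Option.some_injective ℕ).injOn).subset ?_
  rintro k ⟨y, -, hy⟩
  exact ⟨y, hy⟩

lemma not_PPos_of_NPos {x : G.V} (h : G.NPos x) : ¬ G.PPos x := by
  induction h with
  | intro x y hxy _ ih =>
    intro hP
    obtain ⟨_, z, hyz, hz⟩ := hP y hxy
    exact ih z hyz hz

def IsSoundLabeling (g : G.V → Option ℕ) : Prop :=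
  ∀ x m, g x = some m → (m = 0 → G.PPos x) ∧ (m ≠ 0 → G.NPos x)

variable {G}

lemma IsSoundLabeling.step {g : G.V → Option ℕ} (hg : G.IsSoundLabeling g) :
    G.IsSoundLabeling (G.step g) := by
  intro x m hx
  rcases hgx : g x with _ | m'
  swap
  · rw [G.step_of_eq_some hgx] at hx
    exact Option.some_injective _ hx ▸ hg x m' hgx
  set S := {k | ∃ y, G.adj x y ∧ g y = some k}
  simp only [CycGame.step, hgx] at hx
  split_ifs at hx with hrevert
  obtain rfl : mex S = m := Option.some_injective _ hx
  refine ⟨fun hm0 y hxy => ?_, fun hm0 => ?_⟩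
  · rcases hgy : g y with _ | k
    · obtain ⟨z, hyz, hz⟩ := hrevert y hxy (by simp [hgy])
      exact .intro y z hyz ((hg z _ hz).1 hm0)
    · have hk0 : k ≠ 0 := by
        rintro rfl
        exact mex_notMem (G.finite_setOf_adj_eq_some g x) (hm0 ▸ ⟨y, hxy, hgy⟩)
      exact (hg y k hgy).2 hk0
  · obtain ⟨y, hxy, hy⟩ : 0 ∈ S := mem_of_lt_mex (Nat.pos_of_ne_zero hm0)
    exact .intro x y hxy ((hg y 0 hy).1 rfl)

variable (G)

lemma isSoundLabeling_smith : G.IsSoundLabeling G.smith := by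
  suffices ∀ n, G.IsSoundLabeling (G.step^[n] fun _ => none) from this _
  intro n
  induction n with
  | zero => intro _ _ h; cases h
  | succ n ih => rw [Function.iterate_succ']; exact ih.step

lemma NPos_of_zero_mem_exits {x : G.V} (h : 0 ∈ G.exits x) : G.NPos x := by
  obtain ⟨y, hxy, hy⟩ := h
  exact .intro x y hxy ((G.isSoundLabeling_smith y 0 hy).1 rfl)

lemma smith_eq_zero_of_forall_zero_mem_exits {x : G.V}
    (h : ∀ y, G.adj x y → 0 ∈ G.exits y) : G.smith x = some 0 := by
  have hP : G.PPos x := fun y hxy => G.NPos_of_zero_mem_exits (h y hxy)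
  have hmex : mex (G.exits x) = 0 := Nat.sInf_eq_zero.mpr <| Or.inl fun ⟨y, hxy, hy⟩ =>
    G.not_PPos_of_NPos (G.NPos_of_zero_mem_exits (h y hxy))
      ((G.isSoundLabeling_smith y 0 hy).1 rfl)
  rcases hx : G.smith x with _ | m
  · -- `x` would be assigned `0` by one more step of the algorithm
    have hstep : G.step G.smith x = G.smith x := congrFun G.smith_isFixedPt x
    simp only [CycGame.step, hx] at hstep
    rw [if_pos] at hstep
    · cases hstep
    · intro y hxy _
      obtain ⟨z, hyz, hz⟩ := h y hxy
      exact ⟨z, hyz, hz.trans (congrArg some hmex.symm)⟩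
  · by_contra hm0
    exact G.not_PPos_of_NPos ((G.isSoundLabeling_smith x m hx).2 (by simpa using hm0)) hP

lemma zero_mem_exits_of_NPos {x : G.V} (h : G.NPos x) : 0 ∈ G.exits x := by
  induction h with
  | intro x y hxy _ ih => exact ⟨y, hxy, G.smith_eq_zero_of_forall_zero_mem_exits ih⟩

lemma NPos_iff_zero_mem_exits {x : G.V} : G.NPos x ↔ 0 ∈ G.exits x :=
  ⟨G.zero_mem_exits_of_NPos, G.NPos_of_zero_mem_exits⟩

lemma smith_eq_zero_of_PPos {x : G.V} (h : G.PPos x) : G.smith x = some 0 :=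
  G.smith_eq_zero_of_forall_zero_mem_exits fun y hxy => G.zero_mem_exits_of_NPos (h y hxy)

end CycGame

/-- In the Smith–Fraenkel–Perl theory, a cyclic impartial game position is a
Draw if and only if its Grundy value is `∞_D` with `0 ∉ D`, i.e. it lies in
a cyclic zone and no option has Grundy value `0`. -/
theorem draw_iff_cyclic_no_zero_exit (G : CycGame) (x : G.V) :
    G.Draw x ↔ G.smith x = none ∧ 0 ∉ G.exits x := by
  rw [CycGame.Draw, ← G.NPos_iff_zero_mem_exits]
  constructor
  · rintro ⟨hN, hP⟩
    refine ⟨?_, hN⟩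
    rcases hx : G.smith x with _ | m
    · rfl
    · by_cases hm : m = 0
      · exact absurd ((G.isSoundLabeling_smith x m hx).1 hm) hP
      · exact absurd ((G.isSoundLabeling_smith x m hx).2 hm) hN
  · rintro ⟨hnone, hN⟩
    refine ⟨hN, fun hP => ?_⟩
    simp [G.smith_eq_zero_of_PPos hP] at hnone
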